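/- arXiv:2301.03758 — 6 statements merged into one kernel-verified Lean document; each statement's English description precedes it below -/
import Mathlib

section
/- Consider N ≥ 1 agents with demands X ∈ ℝ^N satisfying X_i > 0 for all i, weights w ∈ ℝ^N satisfying w_i > 0 for all i, and budget B with 0 < B ≤ Σ_{i=1}^N X_i. Suppose μ > 0 satisfies Σ_{i=1}^N min{X_i, w_i·μ} = B. Then the vector A* defined by A*_i = min{X_i, w_i·μ} is feasible for the Eisenberg–Gale program, and for every feasible vector A one has Σ_{i=1}^N w_i·log A*_i ≥ Σ_{i=1}^N w_i·log A_i. (Correctness of the water-filling solution.) -/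
/-!
The water-filling allocation `s_i = min (X_i, w_i μ)` satisfies the KKT conditions of the
Eisenberg–Gale program with multiplier `1 / μ` on the budget: by concavity,
`w_i log a - w_i log s_i ≤ (w_i / s_i) (a - s_i)`, and `w_i / s_i ≥ 1 / μ` with equality
unless `s_i = X_i`, in which case `a - s_i ≤ 0`. Hence each term is bounded by `(a_i - s_i) / μ`,
and summing uses up no more than the budget `∑ s_i = B`.
-/

open Finset

lemma Real.log_sub_log_le_div {a s : ℝ} (ha : 0 < a) (hs : 0 < s) :
    Real.log a - Real.log s ≤ (a - s) / s := by
  have h := Real.log_le_sub_one_of_pos (div_pos ha hs)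
  rwa [Real.log_div ha.ne' hs.ne', div_sub_one hs.ne'] at h

lemma mul_log_sub_mul_log_min_le {x w μ a : ℝ} (hx : 0 < x) (hw : 0 < w) (hμ : 0 < μ)
    (ha : 0 < a) (hax : a ≤ x) :
    w * Real.log a - w * Real.log (min x (w * μ)) ≤ (a - min x (w * μ)) / μ := by
  set s := min x (w * μ)
  have hs : 0 < s := lt_min hx (mul_pos hw hμ)
  have hconcave : w * Real.log a - w * Real.log s ≤ w * ((a - s) / s) := by
    rw [← mul_sub]
    exact mul_le_mul_of_nonneg_left (Real.log_sub_log_le_div ha hs) hw.le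
  have hslack : w * ((a - s) / s) ≤ (a - s) / μ := by
    rcases le_total (w * μ) x with hwx | hxw
    · have hs_eq : s = w * μ := min_eq_right hwx
      rw [hs_eq, mul_div_assoc', mul_div_mul_left _ _ hw.ne']
    · have hs_eq : s = x := min_eq_left hxw
      have has : a - s ≤ 0 := by linarith
      rw [mul_div_assoc', div_le_div_iff₀ hs hμ]
      nlinarith
  exact hconcave.trans hslack

lemma sum_mul_log_le_sum_mul_log_min {ι : Type*} [Fintype ι] {X w A : ι → ℝ} {μ : ℝ}
    (hX : ∀ i, 0 < X i) (hw : ∀ i, 0 < w i) (hμ : 0 < μ)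
    (hA : ∀ i, 0 < A i) (hAX : ∀ i, A i ≤ X i)
    (hsum : ∑ i, A i ≤ ∑ i, min (X i) (w i * μ)) :
    ∑ i, w i * Real.log (A i) ≤ ∑ i, w i * Real.log (min (X i) (w i * μ)) := by
  have hterms : ∑ i, (w i * Real.log (A i) - w i * Real.log (min (X i) (w i * μ))) ≤
      ∑ i, (A i - min (X i) (w i * μ)) / μ :=
    sum_le_sum fun i _ => mul_log_sub_mul_log_min_le (hX i) (hw i) hμ (hA i) (hAX i)
  have hbudget : ∑ i, (A i - min (X i) (w i * μ)) / μ ≤ 0 := by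
    rw [← sum_div, sum_sub_distrib]
    exact div_nonpos_of_nonpos_of_nonneg (by linarith) hμ.le
  rw [sum_sub_distrib] at hterms
  linarith

theorem waterfilling_is_maximizer_general
    (N : ℕ) (X w : Fin N → ℝ)
    (hX : ∀ i, 0 < X i) (hw : ∀ i, 0 < w i)
    (B : ℝ)
    (μ : ℝ) (hμ : 0 < μ)
    (hlevel : ∑ i, min (X i) (w i * μ) = B) :
    (∀ i, 0 < min (X i) (w i * μ)) ∧
    (∀ i, min (X i) (w i * μ) ≤ X i) ∧
    (∑ i, min (X i) (w i * μ) ≤ B) ∧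
    (∀ A : Fin N → ℝ, (∀ i, 0 < A i) → (∀ i, A i ≤ X i) → (∑ i, A i ≤ B) →
      ∑ i, w i * Real.log (A i) ≤ ∑ i, w i * Real.log (min (X i) (w i * μ))) :=
  ⟨fun i => lt_min (hX i) (mul_pos (hw i) hμ), fun _ => min_le_left _ _, hlevel.le,
    fun _ hA hAX hAB => sum_mul_log_le_sum_mul_log_min hX hw hμ hA hAX (hlevel ▸ hAB)⟩

/-- Correctness of the water-filling solution: if `μ > 0` is a water level whose
water-filling allocation `A*_i = min {X_i, w_i μ}` exactly exhausts the budget `B`,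
then `A*` is feasible for the Eisenberg–Gale program and its weighted log objective
dominates that of every feasible allocation. -/
theorem waterfilling_is_maximizer
    (N : ℕ) (hN : 1 ≤ N) (X w : Fin N → ℝ)
    (hX : ∀ i, 0 < X i) (hw : ∀ i, 0 < w i)
    (B : ℝ) (hB : 0 < B) (hBle : B ≤ ∑ i, X i)
    (μ : ℝ) (hμ : 0 < μ)
    (hlevel : ∑ i, min (X i) (w i * μ) = B) :
    (∀ i, 0 < min (X i) (w i * μ)) ∧
    (∀ i, min (X i) (w i * μ) ≤ X i) ∧
    (∑ i, min (X i) (w i * μ) ≤ B) ∧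
    (∀ A : Fin N → ℝ, (∀ i, 0 < A i) → (∀ i, A i ≤ X i) → (∑ i, A i ≤ B) →
      ∑ i, w i * Real.log (A i) ≤ ∑ i, w i * Real.log (min (X i) (w i * μ))) :=
  waterfilling_is_maximizer_general N X w hX hw B μ hμ hlevel
end

section
/- Consider N ≥ 1 agents with demands X ∈ ℝ^N satisfying X_i > 0 for all i, weights w ∈ ℝ^N satisfying w_i > 0 for all i, and budget B with 0 < B ≤ Σ_{i=1}^N X_i. Suppose μ > 0 satisfies Σ_{i=1}^N min{X_i, w_i·μ} = B. Then every maximizer A of the Eisenberg–Gale program satisfies A_i = min{X_i, w_i·μ} for all i; in particular the maximizer is unique and takes the water-filling form. -/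
open Finset

/-- Per-coordinate gradient inequality, with strictness off the diagonal. -/
lemma eg_key (μ wi a Wi : ℝ) (hμ : 0 < μ) (hwi : 0 < wi) (ha : 0 < a)
    (hWi : 0 < Wi) (hle : Wi ≤ wi * μ) (hcase : Wi = wi * μ ∨ a ≤ Wi) :
    wi * (Real.log a - Real.log Wi) ≤ (a - Wi) / μ ∧
      (a ≠ Wi → wi * (Real.log a - Real.log Wi) < (a - Wi) / μ) := by
  have hratio : 0 < a / Wi := div_pos ha hWi
  have hlog : Real.log a - Real.log Wi = Real.log (a / Wi) := (Real.log_div ha.ne' hWi.ne').symm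
  have hstep : (wi / Wi) * (a - Wi) ≤ (a - Wi) / μ := by
    rcases hcase with h | h
    · have : wi / Wi = 1 / μ := by
        rw [h]; field_simp
      rw [this]; ring_nf; rfl
    · have h1 : a - Wi ≤ 0 := by linarith
      have h2 : 1 / μ ≤ wi / Wi := by
        rw [div_le_div_iff₀ hμ hWi]
        linarith
      have := mul_le_mul_of_nonpos_right h2 h1
      calc (wi / Wi) * (a - Wi) ≤ (1 / μ) * (a - Wi) := by linarith
        _ = (a - Wi) / μ := by ring
  constructor
  · have hlb : Real.log (a / Wi) ≤ a / Wi - 1 := Real.log_le_sub_one_of_pos hratio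
    have : wi * (a / Wi - 1) = (wi / Wi) * (a - Wi) := by field_simp
    rw [hlog]
    nlinarith [mul_le_mul_of_nonneg_left hlb hwi.le]
  · intro hne
    have hne1 : a / Wi ≠ 1 := by
      intro h; exact hne (by field_simp at h; linarith)
    have hlb : Real.log (a / Wi) < a / Wi - 1 := Real.log_lt_sub_one_of_pos hratio hne1
    have : wi * (a / Wi - 1) = (wi / Wi) * (a - Wi) := by field_simp
    rw [hlog]
    nlinarith [mul_lt_mul_of_pos_left hlb hwi]

/-- Uniqueness of the Eisenberg–Gale maximizer: if `μ > 0` is a water level whose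
water-filling allocation exactly exhausts the budget, then every maximizer of the
Eisenberg–Gale program coincides with the water-filling allocation
`A_i = min {X_i, w_i μ}`. -/
theorem maximizer_is_waterfilling
    (N : ℕ) (hN : 1 ≤ N) (X w : Fin N → ℝ)
    (hX : ∀ i, 0 < X i) (hw : ∀ i, 0 < w i)
    (B : ℝ) (hB : 0 < B) (hBle : B ≤ ∑ i, X i)
    (μ : ℝ) (hμ : 0 < μ)
    (hlevel : ∑ i, min (X i) (w i * μ) = B)
    (A : Fin N → ℝ)
    (hApos : ∀ i, 0 < A i) (hAle : ∀ i, A i ≤ X i) (hAsum : ∑ i, A i ≤ B)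
    (hAmax : ∀ A' : Fin N → ℝ, (∀ i, 0 < A' i) → (∀ i, A' i ≤ X i) →
      (∑ i, A' i ≤ B) → ∑ i, w i * Real.log (A' i) ≤ ∑ i, w i * Real.log (A i)) :
    ∀ i, A i = min (X i) (w i * μ) := by
  set W : Fin N → ℝ := fun i => min (X i) (w i * μ) with hW
  have hWpos : ∀ i, 0 < W i := fun i => lt_min (hX i) (mul_pos (hw i) hμ)
  have hWleX : ∀ i, W i ≤ X i := fun i => min_le_left _ _
  have hWlewμ : ∀ i, W i ≤ w i * μ := fun i => min_le_right _ _
  have hWcase : ∀ i, W i = w i * μ ∨ A i ≤ W i := by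
    intro i
    rcases le_or_gt (X i) (w i * μ) with h | h
    · right; rw [hW]; simp only [min_eq_left h]; exact hAle i
    · left; rw [hW]; simp only [min_eq_right h.le]
  have h1 : ∑ i, w i * Real.log (W i) ≤ ∑ i, w i * Real.log (A i) :=
    hAmax W hWpos hWleX (le_of_eq hlevel)
  
  -- define g
  set g : Fin N → ℝ := fun i => (A i - W i) / μ - w i * (Real.log (A i) - Real.log (W i)) with hg
  have hgnn : ∀ i ∈ Finset.univ, 0 ≤ g i := by
    intro i _
    have := (eg_key μ (w i) (A i) (W i) hμ (hw i) (hApos i) (hWpos i) (hWlewμ i) (hWcase i)).1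
    simp only [hg]; linarith
  have hgsum : ∑ i, g i ≤ 0 := by
    have hs : ∑ i, g i = (∑ i, A i - B) / μ - (∑ i, w i * Real.log (A i) - ∑ i, w i * Real.log (W i)) := by
      simp only [hg]
      rw [← hlevel]
      push_cast
      rw [Finset.sum_sub_distrib]
      congr 1
      · rw [← Finset.sum_div, Finset.sum_sub_distrib]
      · rw [← Finset.sum_sub_distrib]
        apply Finset.sum_congr rfl
        intro i _; ring
    rw [hs]
    have : (∑ i, A i - B) / μ ≤ 0 := div_nonpos_of_nonpos_of_nonneg (by linarith) hμ.le
    linarith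
  have hgzero : ∀ i ∈ Finset.univ, g i = 0 := by
    intro i hi
    have := (Finset.sum_eq_zero_iff_of_nonneg hgnn).1 (le_antisymm hgsum (Finset.sum_nonneg hgnn)) i hi
    exact this
  intro i
  by_contra hne
  have hstrict := (eg_key μ (w i) (A i) (W i) hμ (hw i) (hApos i) (hWpos i) (hWlewμ i) (hWcase i)).2 hne
  have := hgzero i (Finset.mem_univ i)
  simp only [hg] at this
  linarith
end

section
/- Let X, Y, Ȳ, C, C̄, D, E be real numbers satisfying: 0 ≤ X ≤ Ȳ, 0 < Y ≤ Ȳ, 0 ≤ C ≤ Y, |C̄ − C| ≤ D, and Ȳ − Y ≤ E with E ≥ 0. Then |X·C̄/Ȳ − X·C/Y| ≤ D + E. (In the paper's notation, if the total current-plus-reserved allocations C̄ and C computed from upper- and lower-bound future demand estimates Ȳ and Y differ by at most D, and the demand estimates differ by at most E = 2·√((T−t)/ξ)·std, then the per-step allocations X·C̄/Ȳ and X·C/Y obtained by the proportional split differ by at most D + E.) -/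
/-- Algebraic core of the proportional-split stability bound (Lemma 5 of the paper):
if the current-plus-reserved allocations `C̄` and `C` differ by at most `D` and the
demand estimates `Ȳ ≥ Y` differ by at most `E`, then the proportionally split
per-step allocations `X·C̄/Ȳ` and `X·C/Y` differ by at most `D + E`. -/
theorem proportional_split_stability
    (X Y Ybar C Cbar D E : ℝ)
    (hX0 : 0 ≤ X) (hXY : X ≤ Ybar)
    (hY0 : 0 < Y) (hYY : Y ≤ Ybar)
    (hC0 : 0 ≤ C) (hCY : C ≤ Y)
    (hCC : |Cbar - C| ≤ D)
    (hE : Ybar - Y ≤ E) (hE0 : 0 ≤ E) :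
    |X * Cbar / Ybar - X * C / Y| ≤ D + E := by
  have hYb : 0 < Ybar := lt_of_lt_of_le hY0 hYY
  have key : X * Cbar / Ybar - X * C / Y
      = X / Ybar * (Cbar - C) + (X * C * (Y - Ybar)) / (Ybar * Y) := by
    field_simp
    ring
  rw [key]
  have h1 : |X / Ybar * (Cbar - C)| ≤ D := by
    rw [abs_mul]
    have hx : |X / Ybar| ≤ 1 := by
      rw [abs_of_nonneg (div_nonneg hX0 hYb.le)]
      exact div_le_one_of_le₀ hXY hYb.le
    calc |X / Ybar| * |Cbar - C| ≤ 1 * |Cbar - C| :=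
          mul_le_mul_of_nonneg_right hx (abs_nonneg _)
      _ = |Cbar - C| := one_mul _
      _ ≤ D := hCC
  have h2 : |(X * C * (Y - Ybar)) / (Ybar * Y)| ≤ E := by
    rw [abs_div, abs_of_nonneg (mul_nonneg hYb.le hY0.le)]
    rw [div_le_iff₀ (mul_pos hYb hY0)]
    have : |X * C * (Y - Ybar)| = X * C * (Ybar - Y) := by
      rw [abs_mul, abs_of_nonneg (mul_nonneg hX0 hC0), abs_sub_comm,
        abs_of_nonneg (by linarith)]
    rw [this]
    have s1 : X * C * (Ybar - Y) ≤ Ybar * Y * (Ybar - Y) := by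
      nlinarith [mul_nonneg (sub_nonneg.2 hXY) (mul_nonneg hC0 (sub_nonneg.2 hYY)),
        mul_nonneg (mul_nonneg (sub_nonneg.2 hCY) hYb.le) (sub_nonneg.2 hYY)]
    have s2 : Ybar * Y * (Ybar - Y) ≤ Ybar * Y * E :=
      mul_le_mul_of_nonneg_left hE (mul_nonneg hYb.le hY0.le)
    linarith
  calc |X / Ybar * (Cbar - C) + (X * C * (Y - Ybar)) / (Ybar * Y)|
      ≤ |X / Ybar * (Cbar - C)| + |(X * C * (Y - Ybar)) / (Ybar * Y)| := abs_add_le _ _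
    _ ≤ D + E := add_le_add h1 h2
end

section
/- Consider N ≥ 1 agents over a horizon T ≥ 1, with demands X_i^t ≥ 0 for agent i at step t such that S_i^t := Σ_{τ=t}^T X_i^τ > 0 for all i and t, weights w_i > 0, and budget B with 0 < B ≤ Σ_{i=1}^N S_i^1. Let Ã ∈ ℝ^N be a maximizer of Σ_{i=1}^N w_i·log Ã_i subject to 0 < Ã_i ≤ S_i^1 for all i and Σ_{i=1}^N Ã_i ≤ B (the hindsight Eisenberg–Gale program on total demands). For each agent i, define recursively C_i^1 = Ã_i, A_i^t = (X_i^t/S_i^t)·C_i^t, and C_i^{t+1} = C_i^t − A_i^t for t = 1, …, T. Then the resulting per-step allocations satisfy 0 ≤ A_i^t ≤ X_i^t for all i and t, and Σ_{t=1}^T A_i^t = Ã_i for every i; i.e., SAFFE-Oracle's allocations are a hindsight-optimal allocation: they respect every per-step demand constraint and their per-agent totals equal the Eisenberg–Gale hindsight solution. -/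
open Finset

/-!
If the reserve `C t` is a fixed fraction `r` of the remaining demand `S t`, then handing out the share
`X t / S t` of it allocates `r * X t` and leaves `r * (S t - X t) = r * S (t + 1)`. So by induction every
step allocates the same fraction `r = Ã / S 1 ∈ (0, 1]` of its demand, and the allocations sum to
`r * S 1 = Ã`.
-/

theorem sum_Icc_eq_add_sum_Icc_add_one {M : Type*} [AddCommMonoid M] (f : ℕ → M) {t T : ℕ}
    (h : t ≤ T) : ∑ τ ∈ Icc t T, f τ = f t + ∑ τ ∈ Icc (t + 1) T, f τ := by
  rw [Icc_add_one_left_eq_Ioc, add_sum_Ioc_eq_sum_Icc h]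

section ProportionalSplit

variable {X S C A : ℕ → ℝ} {T : ℕ} {r : ℝ}
  (hS : ∀ t, S t = ∑ τ ∈ Icc t T, X τ) (hS0 : ∀ t ∈ Icc 1 T, S t ≠ 0)
  (hC1 : C 1 = r * S 1) (hA : ∀ t ∈ Icc 1 T, A t = X t / S t * C t)
  (hC : ∀ t ∈ Icc 1 T, C (t + 1) = C t - A t)
include hS hS0 hC1 hA hC

theorem reserve_eq_mul_remaining_demand : ∀ t ∈ Icc 1 T, C t = r * S t := by
  intro t ht
  obtain ⟨ht1, htT⟩ := mem_Icc.mp ht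
  induction t, ht1 using Nat.le_induction with
  | base => exact hC1
  | succ t ht1 ih =>
    have hmem : t ∈ Icc 1 T := mem_Icc.mpr ⟨ht1, by omega⟩
    have hsplit : S t = X t + S (t + 1) := by
      rw [hS, hS, sum_Icc_eq_add_sum_Icc_add_one X (by omega)]
    rw [hC t hmem, hA t hmem, ih hmem (by omega)]
    field_simp [hS0 t hmem]
    linear_combination r * hsplit

theorem alloc_eq_mul_demand : ∀ t ∈ Icc 1 T, A t = r * X t := by
  intro t ht
  rw [hA t ht, reserve_eq_mul_remaining_demand hS hS0 hC1 hA hC t ht]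
  field_simp [hS0 t ht]

theorem sum_alloc_eq_mul_total_demand : ∑ t ∈ Icc 1 T, A t = r * S 1 := by
  rw [hS 1, mul_sum]
  exact sum_congr rfl (alloc_eq_mul_demand hS hS0 hC1 hA hC)

end ProportionalSplit

theorem saffe_oracle_matches_hindsight_general
    (N T : ℕ) (hT : 1 ≤ T)
    (X S : Fin N → ℕ → ℝ)
    (hXnn : ∀ i t, 0 ≤ X i t)
    (hS : ∀ i t, S i t = ∑ τ ∈ Finset.Icc t T, X i τ)
    (hSpos : ∀ i, ∀ t ∈ Finset.Icc 1 T, 0 < S i t)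
    (Atil : Fin N → ℝ)
    (hpos : ∀ i, 0 < Atil i) (hle : ∀ i, Atil i ≤ S i 1)
    (A C : Fin N → ℕ → ℝ)
    (hC1 : ∀ i, C i 1 = Atil i)
    (hA : ∀ i, ∀ t ∈ Finset.Icc 1 T, A i t = (X i t / S i t) * C i t)
    (hC : ∀ i, ∀ t ∈ Finset.Icc 1 T, C i (t + 1) = C i t - A i t) :
    (∀ i, ∀ t ∈ Finset.Icc 1 T, 0 ≤ A i t ∧ A i t ≤ X i t) ∧
    (∀ i, ∑ t ∈ Finset.Icc 1 T, A i t = Atil i) := by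
  have hS1 : ∀ i, 0 < S i 1 := fun i => hSpos i 1 (mem_Icc.mpr ⟨le_rfl, hT⟩)
  have hC1' : ∀ i, C i 1 = Atil i / S i 1 * S i 1 := fun i => by
    rw [hC1, div_mul_cancel₀ _ (hS1 i).ne']
  have hS0 : ∀ i, ∀ t ∈ Icc 1 T, S i t ≠ 0 := fun i t ht => (hSpos i t ht).ne'
  refine ⟨fun i t ht => ?_, fun i => ?_⟩
  · rw [alloc_eq_mul_demand (hS i) (hS0 i) (hC1' i) (hA i) (hC i) t ht]
    have hr0 : 0 ≤ Atil i / S i 1 := div_nonneg (hpos i).le (hS1 i).le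
    have hr1 : Atil i / S i 1 ≤ 1 := (div_le_one (hS1 i)).mpr (hle i)
    exact ⟨mul_nonneg hr0 (hXnn i t), mul_le_of_le_one_left (hXnn i t) hr1⟩
  · rw [sum_alloc_eq_mul_total_demand (hS i) (hS0 i) (hC1' i) (hA i) (hC i),
      div_mul_cancel₀ _ (hS1 i).ne']

/-- Theorem 3 of the paper: SAFFE-Oracle achieves the hindsight-optimal allocation.
If `Ã` maximizes the hindsight Eisenberg–Gale program on total demands
`S_i 1 = ∑_{t=1}^T X_i t`, and each agent's allocation is split proportionally to
its known future demands (`C_i 1 = Ã_i`, `A_i t = (X_i t / S_i t) · C_i t`,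
`C_i (t+1) = C_i t − A_i t`), then `0 ≤ A_i t ≤ X_i t` for all `i, t` and
`∑_{t=1}^T A_i t = Ã_i` for every agent `i`. -/
theorem saffe_oracle_matches_hindsight
    (N T : ℕ) (hN : 1 ≤ N) (hT : 1 ≤ T)
    (X S : Fin N → ℕ → ℝ) (w : Fin N → ℝ) (B : ℝ)
    (hXnn : ∀ i t, 0 ≤ X i t)
    (hS : ∀ i t, S i t = ∑ τ ∈ Finset.Icc t T, X i τ)
    (hSpos : ∀ i, ∀ t ∈ Finset.Icc 1 T, 0 < S i t)
    (hw : ∀ i, 0 < w i)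
    (hB : 0 < B) (hBle : B ≤ ∑ i, S i 1)
    (Atil : Fin N → ℝ)
    (hpos : ∀ i, 0 < Atil i) (hle : ∀ i, Atil i ≤ S i 1)
    (hsum : ∑ i, Atil i ≤ B)
    (hmax : ∀ A' : Fin N → ℝ, (∀ i, 0 < A' i) → (∀ i, A' i ≤ S i 1) →
      (∑ i, A' i ≤ B) →
      ∑ i, w i * Real.log (A' i) ≤ ∑ i, w i * Real.log (Atil i))
    (A C : Fin N → ℕ → ℝ)
    (hC1 : ∀ i, C i 1 = Atil i)
    (hA : ∀ i, ∀ t ∈ Finset.Icc 1 T, A i t = (X i t / S i t) * C i t)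
    (hC : ∀ i, ∀ t ∈ Finset.Icc 1 T, C i (t + 1) = C i t - A i t) :
    (∀ i, ∀ t ∈ Finset.Icc 1 T, 0 ≤ A i t ∧ A i t ≤ X i t) ∧
    (∀ i, ∑ t ∈ Finset.Icc 1 T, A i t = Atil i) :=
  saffe_oracle_matches_hindsight_general N T hT X S hXnn hS hSpos Atil hpos hle A C hC1 hA hC
end

section
/- Consider N ≥ 1 agents and a budget B > 0, with two demand vectors X, X' ∈ ℝ^N satisfying 0 < X_i ≤ X'_i for all i. Let A be a maximizer of Σ_{i=1}^N log A_i over {A : 0 < A_i ≤ X_i for all i, Σ_i A_i ≤ B}, and let A' be a maximizer of Σ_{i=1}^N log A'_i over {A' : 0 < A'_i ≤ X'_i for all i, Σ_i A'_i ≤ B}. Then for every agent i: A'_i − A_i ≤ X'_i − X_i, and A_i − A'_i ≤ Σ_{j ≠ i} (X'_j − X_j). (Perturbation stability of water-filling: enlarging the demand caps can increase an agent's allocation by at most its own cap increase, and can decrease it by at most the total cap increase of the other agents.) -/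
/-!
Two local perturbations of an optimum give the water-filling structure: if budget is left over,
every agent sits at its cap (raising an uncapped agent increases `∑ log`), and an uncapped agent
holds a largest allocation (shifting a little mass to it from a larger one increases
`log a + log c`). If agent `i` gained more than `X' i - X i`, it is uncapped under `X`, so `A`
spends the whole budget and some agent `j` loses under `A'`; then `j` is uncapped under `X'`, and
`A' i ≤ A' j < A j ≤ A i`. Enlarging the caps cannot shrink the total allocation, so summing the
first bound over `j ≠ i` gives the second.
-/

open Finset Function

lemma Fintype.sum_comp_update_add {ι α M : Type*} [Fintype ι] [DecidableEq ι] [AddCommMonoid M]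
    (g : α → M) (A : ι → α) (i : ι) (b : α) :
    ∑ j, g (update A i b j) + g (A i) = ∑ j, g (A j) + g b := by
  have h := comp_update g A i b
  simp only [funext_iff, comp_apply] at h
  simp only [h]
  rw [sum_update_of_mem (mem_univ i), ← sum_erase_add _ _ (mem_univ i), sdiff_singleton_eq_erase]
  simp only [comp_apply]; abel

lemma Real.log_add_log_lt_of_transfer {a c ε : ℝ} (ha : 0 < a) (hε : 0 < ε)
    (hεc : ε < c - a) : Real.log a + Real.log c < Real.log (a + ε) + Real.log (c - ε) := by
  rw [← Real.log_mul ha.ne' (by linarith), ← Real.log_mul (by linarith) (by linarith)]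
  exact Real.log_lt_log (by nlinarith) (by nlinarith)

structure IsWaterfilling {ι : Type*} [Fintype ι] (X : ι → ℝ) (B : ℝ) (A : ι → ℝ) : Prop where
  pos : ∀ i, 0 < A i
  le_cap : ∀ i, A i ≤ X i
  sum_le : ∑ i, A i ≤ B
  sum_log_le : ∀ A₀ : ι → ℝ, (∀ i, 0 < A₀ i) → (∀ i, A₀ i ≤ X i) → ∑ i, A₀ i ≤ B →
    ∑ i, Real.log (A₀ i) ≤ ∑ i, Real.log (A i)

namespace IsWaterfilling

variable {ι : Type*} [Fintype ι] {X X' A A' : ι → ℝ} {B : ℝ}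

lemma eq_cap_of_sum_lt (hA : IsWaterfilling X B A) (hslack : ∑ i, A i < B) (i : ι) :
    A i = X i := by
  classical
  by_contra hne
  have hi : A i < X i := (hA.le_cap i).lt_of_ne hne
  set ε := min (X i - A i) (B - ∑ j, A j)
  have hε : 0 < ε := lt_min (by linarith) (by linarith)
  have hεX : ε ≤ X i - A i := min_le_left _ _
  have hεB : ε ≤ B - ∑ j, A j := min_le_right _ _
  have hsum := Fintype.sum_comp_update_add id A i (A i + ε)
  have hlog := Fintype.sum_comp_update_add Real.log A i (A i + ε)
  have hgain : Real.log (A i) < Real.log (A i + ε) := Real.log_lt_log (hA.pos i) (by linarith)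
  have hmax := hA.sum_log_le (update A i (A i + ε))
    ((forall_update_iff A fun _ x ↦ 0 < x).2 ⟨by linarith [hA.pos i], fun j _ ↦ hA.pos j⟩)
    ((forall_update_iff A fun j x ↦ x ≤ X j).2 ⟨by linarith, fun j _ ↦ hA.le_cap j⟩)
    (by simp only [id] at hsum; linarith)
  linarith

lemma sum_eq_of_lt_cap (hA : IsWaterfilling X B A) {i : ι} (hi : A i < X i) :
    ∑ j, A j = B :=
  hA.sum_le.eq_of_not_lt fun hslack ↦ hi.ne (hA.eq_cap_of_sum_lt hslack i)

lemma le_of_lt_cap (hA : IsWaterfilling X B A) {i : ι} (hi : A i < X i) (j : ι) :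
    A j ≤ A i := by
  classical
  by_contra! hji
  have hne : j ≠ i := by rintro rfl; exact hji.false
  set ε := min ((A j - A i) / 2) (X i - A i)
  have hε : 0 < ε := lt_min (by linarith) (by linarith)
  have hεA : ε ≤ (A j - A i) / 2 := min_le_left _ _
  have hεX : ε ≤ X i - A i := min_le_right _ _
  set A₁ := update A i (A i + ε)
  have hA₁j : A₁ j = A j := update_of_ne hne _ _
  have hsum₁ : ∑ k, A₁ k + A i = ∑ k, A k + (A i + ε) :=
    Fintype.sum_comp_update_add id A i (A i + ε)
  have hlog₁ : ∑ k, Real.log (A₁ k) + Real.log (A i) = ∑ k, Real.log (A k) + Real.log (A i + ε) :=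
    Fintype.sum_comp_update_add Real.log A i (A i + ε)
  have hsum₂ := Fintype.sum_comp_update_add id A₁ j (A j - ε)
  have hlog₂ := Fintype.sum_comp_update_add Real.log A₁ j (A j - ε)
  simp only [id, hA₁j] at hsum₂ hlog₂
  have hgain := Real.log_add_log_lt_of_transfer (c := A j) (hA.pos i) hε (by linarith)
  have hA₁pos : ∀ k, 0 < A₁ k :=
    (forall_update_iff A fun _ x ↦ 0 < x).2 ⟨by linarith [hA.pos i], fun k _ ↦ hA.pos k⟩
  have hA₁le : ∀ k, A₁ k ≤ X k :=
    (forall_update_iff A fun k x ↦ x ≤ X k).2 ⟨by linarith, fun k _ ↦ hA.le_cap k⟩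
  have hmax := hA.sum_log_le (update A₁ j (A j - ε))
    ((forall_update_iff A₁ fun _ x ↦ 0 < x).2 ⟨by linarith [hA.pos i], fun k _ ↦ hA₁pos k⟩)
    ((forall_update_iff A₁ fun k x ↦ x ≤ X k).2 ⟨by linarith [hA.le_cap j], fun k _ ↦ hA₁le k⟩)
    (by linarith [hA.sum_le])
  linarith

lemma sub_le_cap_sub (hA : IsWaterfilling X B A) (hA' : IsWaterfilling X' B A')
    (hXX' : ∀ i, X i ≤ X' i) (i : ι) : A' i - A i ≤ X' i - X i := by
  rcases (hA.le_cap i).eq_or_lt with hsat | hunsat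
  · linarith [hA'.le_cap i]
  by_contra! hgt
  have hAi : A i < A' i := by linarith [hXX' i]
  obtain ⟨j, hj⟩ : ∃ j, A' j < A j := by
    by_contra! hall
    have := sum_lt_sum (fun j _ ↦ hall j) ⟨i, mem_univ i, hAi⟩
    linarith [hA.sum_eq_of_lt_cap hunsat, hA'.sum_le]
  have hj' : A' j < X' j := hj.trans_le ((hA.le_cap j).trans (hXX' j))
  linarith [hA'.le_of_lt_cap hj' i, hA.le_of_lt_cap hunsat j]

lemma sum_le_sum_of_cap_le (hA : IsWaterfilling X B A) (hA' : IsWaterfilling X' B A')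
    (hXX' : ∀ i, X i ≤ X' i) : ∑ i, A i ≤ ∑ i, A' i := by
  by_contra! hlt
  have hsat := hA'.eq_cap_of_sum_lt (hlt.trans_le hA.sum_le)
  exact hlt.not_ge (sum_le_sum fun j _ ↦ (hA.le_cap j).trans ((hXX' j).trans (hsat j).ge))

lemma sub_le_sum_erase_cap_sub [DecidableEq ι] (hA : IsWaterfilling X B A) (hA' : IsWaterfilling X' B A')
    (hXX' : ∀ i, X i ≤ X' i) (i : ι) :
    A i - A' i ≤ ∑ j ∈ univ.erase i, (X' j - X j) := by
  have hothers : ∑ j ∈ univ.erase i, (A' j - A j) ≤ ∑ j ∈ univ.erase i, (X' j - X j) :=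
    sum_le_sum fun j _ ↦ hA.sub_le_cap_sub hA' hXX' j
  have htotal := hA.sum_le_sum_of_cap_le hA' hXX'
  rw [← add_sum_erase _ _ (mem_univ i), ← add_sum_erase _ A' (mem_univ i)] at htotal
  rw [sum_sub_distrib] at hothers
  linarith

end IsWaterfilling

theorem waterfilling_perturbation_stability_general
    (N : ℕ) (B : ℝ)
    (X X' : Fin N → ℝ)
    (hXX' : ∀ i, X i ≤ X' i)
    (A A' : Fin N → ℝ)
    (hApos : ∀ i, 0 < A i) (hAle : ∀ i, A i ≤ X i) (hAsum : ∑ i, A i ≤ B)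
    (hAmax : ∀ A₀ : Fin N → ℝ, (∀ i, 0 < A₀ i) → (∀ i, A₀ i ≤ X i) →
      (∑ i, A₀ i ≤ B) → ∑ i, Real.log (A₀ i) ≤ ∑ i, Real.log (A i))
    (hA'pos : ∀ i, 0 < A' i) (hA'le : ∀ i, A' i ≤ X' i) (hA'sum : ∑ i, A' i ≤ B)
    (hA'max : ∀ A₀ : Fin N → ℝ, (∀ i, 0 < A₀ i) → (∀ i, A₀ i ≤ X' i) →
      (∑ i, A₀ i ≤ B) → ∑ i, Real.log (A₀ i) ≤ ∑ i, Real.log (A' i)) :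
    ∀ i, A' i - A i ≤ X' i - X i ∧
      A i - A' i ≤ ∑ j ∈ Finset.univ.erase i, (X' j - X j) := by
  have hA : IsWaterfilling X B A := ⟨hApos, hAle, hAsum, hAmax⟩
  have hA' : IsWaterfilling X' B A' := ⟨hA'pos, hA'le, hA'sum, hA'max⟩
  exact fun i ↦ ⟨hA.sub_le_cap_sub hA' hXX' i, hA.sub_le_sum_erase_cap_sub hA' hXX' i⟩

/-- Perturbation stability of water-filling (core of Lemma 3 of the paper):
if the demand caps are enlarged from `X` to `X'` (componentwise), then each agent's
optimal allocation can increase by at most its own cap increase `X'_i − X_i`, and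
can decrease by at most the total cap increase `∑_{j ≠ i} (X'_j − X_j)` of the
other agents. -/
theorem waterfilling_perturbation_stability
    (N : ℕ) (hN : 1 ≤ N) (B : ℝ) (hB : 0 < B)
    (X X' : Fin N → ℝ)
    (hX : ∀ i, 0 < X i) (hXX' : ∀ i, X i ≤ X' i)
    (A A' : Fin N → ℝ)
    (hApos : ∀ i, 0 < A i) (hAle : ∀ i, A i ≤ X i) (hAsum : ∑ i, A i ≤ B)
    (hAmax : ∀ A₀ : Fin N → ℝ, (∀ i, 0 < A₀ i) → (∀ i, A₀ i ≤ X i) →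
      (∑ i, A₀ i ≤ B) → ∑ i, Real.log (A₀ i) ≤ ∑ i, Real.log (A i))
    (hA'pos : ∀ i, 0 < A' i) (hA'le : ∀ i, A' i ≤ X' i) (hA'sum : ∑ i, A' i ≤ B)
    (hA'max : ∀ A₀ : Fin N → ℝ, (∀ i, 0 < A₀ i) → (∀ i, A₀ i ≤ X' i) →
      (∑ i, A₀ i ≤ B) → ∑ i, Real.log (A₀ i) ≤ ∑ i, Real.log (A' i)) :
    ∀ i, A' i - A i ≤ X' i - X i ∧
      A i - A' i ≤ ∑ j ∈ Finset.univ.erase i, (X' j - X j) :=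
  waterfilling_perturbation_stability_general N B X X' hXX' A A' hApos hAle hAsum hAmax hA'pos hA'le
    hA'sum hA'max
end

section
/- Consider N ≥ 1 agents with weights w_i > 0, past cumulative allocations a_i ≥ 0, remaining demands Y_i > 0, and remaining budget B with 0 < B ≤ Σ_{i=1}^N Y_i. Suppose μ > 0 satisfies Σ_{i=1}^N min{Y_i, max(w_i·μ − a_i, 0)} = B. Then the vector C* defined by C*_i = min{Y_i, max(w_i·μ − a_i, 0)} satisfies a_i + C*_i > 0 for all i, is feasible (0 ≤ C*_i ≤ Y_i and Σ_i C*_i ≤ B), and maximizes Σ_{i=1}^N w_i·log(a_i + C_i) over all C ∈ ℝ^N with 0 ≤ C_i ≤ Y_i for all i, Σ_i C_i ≤ B, and a_i + C_i > 0 for all i. (Correctness of the water-filling algorithm with past allocations, the per-step subproblem solved by SAFFE.) -/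
/-!
The objective is concave and the constraint `∑ C_i ≤ B` is linear, so it suffices to exhibit a
Lagrange multiplier: with multiplier `1/μ`, each agent's share `C*_i` maximizes
`w_i log (a_i + c) - c/μ` over `c ∈ [0, Y_i]`, since the derivative `w_i/(a_i + c) - 1/μ` at
`C*_i` is `0` when `0 < C*_i < Y_i`, is `≥ 0` when `C*_i = Y_i` and is `≤ 0` when `C*_i = 0`.
Summing over agents and using `∑ C_i ≤ B = ∑ C*_i` gives optimality.
-/

open Finset

namespace Real

theorem log_le_log_add_sub_div {x y : ℝ} (hx : 0 < x) (hy : 0 < y) :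
    log y ≤ log x + (y - x) / x := by
  have h := log_le_sub_one_of_pos (div_pos hy hx)
  rw [log_div hy.ne' hx.ne', div_sub_one hx.ne'] at h
  linarith

end Real

noncomputable def waterFill (Y w a μ : ℝ) : ℝ := min Y (max (w * μ - a) 0)

namespace waterFill

variable {Y w a μ : ℝ}

theorem nonneg (hY : 0 ≤ Y) : 0 ≤ waterFill Y w a μ :=
  le_min hY (le_max_right _ _)

theorem le_demand : waterFill Y w a μ ≤ Y :=
  min_le_left _ _

theorem add_pos (hY : 0 < Y) (hw : 0 < w) (ha : 0 ≤ a) (hμ : 0 < μ) :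
    0 < a + waterFill Y w a μ := by
  unfold waterFill
  rcases le_or_gt (w * μ - a) 0 with hlow | hhigh
  · have : 0 < w * μ := mul_pos hw hμ
    rw [max_eq_right hlow, min_eq_right hY.le]
    linarith
  · rw [max_eq_left hhigh.le]
    rcases min_choice Y (w * μ - a) with h | h <;> rw [h] <;> linarith

/-- Complementary slackness for the box constraint `0 ≤ c ≤ Y`. -/
theorem sub_mul_sub_nonneg {c : ℝ} (hc0 : 0 ≤ c) (hcY : c ≤ Y) :
    0 ≤ (c - waterFill Y w a μ) * (a + waterFill Y w a μ - w * μ) := by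
  unfold waterFill
  rcases le_total (w * μ - a) 0 with hlow | hhigh
  · rw [max_eq_right hlow]
    rw [min_eq_right (hc0.trans hcY), sub_zero, add_zero]
    exact mul_nonneg hc0 (by linarith)
  · rw [max_eq_left hhigh]
    rcases le_total Y (w * μ - a) with hY | hY
    · rw [min_eq_left hY]
      exact mul_nonneg_of_nonpos_of_nonpos (by linarith) (by linarith)
    · rw [min_eq_right hY]
      rw [add_sub_cancel, sub_self, mul_zero]

theorem mul_log_sub_div_le {c : ℝ} (hw : 0 ≤ w) (hμ : 0 < μ) (hc0 : 0 ≤ c) (hcY : c ≤ Y)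
    (hac : 0 < a + c) (had : 0 < a + waterFill Y w a μ) :
    w * Real.log (a + c) - c / μ ≤ w * Real.log (a + waterFill Y w a μ) - waterFill Y w a μ / μ := by
  set d := waterFill Y w a μ
  have hlog : w * Real.log (a + c) ≤ w * Real.log (a + d) + w * ((c - d) / (a + d)) := by
    rw [← mul_add]
    refine mul_le_mul_of_nonneg_left ?_ hw
    simpa using Real.log_le_log_add_sub_div had hac
  have hslope : w * ((c - d) / (a + d)) ≤ (c - d) / μ := by
    rw [mul_div_assoc', div_le_div_iff₀ had hμ]
    nlinarith [sub_mul_sub_nonneg (w := w) (a := a) (μ := μ) hc0 hcY]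
  have : (c - d) / μ = c / μ - d / μ := sub_div c d μ
  linarith

end waterFill

theorem waterfilling_with_past_allocations_general
    (N : ℕ) (w a Y : Fin N → ℝ)
    (hw : ∀ i, 0 < w i) (ha : ∀ i, 0 ≤ a i) (hY : ∀ i, 0 < Y i)
    (B : ℝ)
    (μ : ℝ) (hμ : 0 < μ)
    (hlevel : ∑ i, min (Y i) (max (w i * μ - a i) 0) = B) :
    (∀ i, 0 < a i + min (Y i) (max (w i * μ - a i) 0)) ∧
    (∀ i, 0 ≤ min (Y i) (max (w i * μ - a i) 0)) ∧
    (∀ i, min (Y i) (max (w i * μ - a i) 0) ≤ Y i) ∧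
    (∑ i, min (Y i) (max (w i * μ - a i) 0) ≤ B) ∧
    (∀ C : Fin N → ℝ, (∀ i, 0 ≤ C i) → (∀ i, C i ≤ Y i) → (∑ i, C i ≤ B) →
      (∀ i, 0 < a i + C i) →
      ∑ i, w i * Real.log (a i + C i) ≤
        ∑ i, w i * Real.log (a i + min (Y i) (max (w i * μ - a i) 0))) := by
  set D : Fin N → ℝ := fun i => waterFill (Y i) (w i) (a i) μ
  have hD : ∀ i, 0 < a i + D i := fun i => waterFill.add_pos (hY i) (hw i) (ha i) hμ
  refine ⟨hD, fun i => waterFill.nonneg (hY i).le, fun i => waterFill.le_demand,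
    hlevel.le, fun C hC0 hCY hCB hC => ?_⟩
  have hsum : ∑ i, (w i * Real.log (a i + C i) - C i / μ) ≤
      ∑ i, (w i * Real.log (a i + D i) - D i / μ) :=
    sum_le_sum fun i _ => waterFill.mul_log_sub_div_le (hw i).le hμ (hC0 i) (hCY i) (hC i) (hD i)
  have hbudget : ∑ i, C i / μ ≤ ∑ i, D i / μ := by
    rw [← sum_div, ← sum_div]
    exact div_le_div_of_nonneg_right (hCB.trans hlevel.ge) hμ.le
  rw [sum_sub_distrib, sum_sub_distrib] at hsum
  show ∑ i, w i * Real.log (a i + C i) ≤ ∑ i, w i * Real.log (a i + D i)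
  linarith

/-- Correctness of the water-filling algorithm with past allocations (the per-step
subproblem solved by SAFFE): if `μ > 0` satisfies
`∑ᵢ min {Y_i, (w_i μ − a_i)⁺} = B`, then `C*_i = min {Y_i, (w_i μ − a_i)⁺}` gives
strictly positive cumulative allocations `a_i + C*_i`, is feasible, and maximizes
`∑ᵢ w_i log (a_i + C_i)` over all feasible `C`. -/
theorem waterfilling_with_past_allocations
    (N : ℕ) (hN : 1 ≤ N) (w a Y : Fin N → ℝ)
    (hw : ∀ i, 0 < w i) (ha : ∀ i, 0 ≤ a i) (hY : ∀ i, 0 < Y i)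
    (B : ℝ) (hB : 0 < B) (hBle : B ≤ ∑ i, Y i)
    (μ : ℝ) (hμ : 0 < μ)
    (hlevel : ∑ i, min (Y i) (max (w i * μ - a i) 0) = B) :
    (∀ i, 0 < a i + min (Y i) (max (w i * μ - a i) 0)) ∧
    (∀ i, 0 ≤ min (Y i) (max (w i * μ - a i) 0)) ∧
    (∀ i, min (Y i) (max (w i * μ - a i) 0) ≤ Y i) ∧
    (∑ i, min (Y i) (max (w i * μ - a i) 0) ≤ B) ∧
    (∀ C : Fin N → ℝ, (∀ i, 0 ≤ C i) → (∀ i, C i ≤ Y i) → (∑ i, C i ≤ B) →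
      (∀ i, 0 < a i + C i) →
      ∑ i, w i * Real.log (a i + C i) ≤
        ∑ i, w i * Real.log (a i + min (Y i) (max (w i * μ - a i) 0))) :=
  waterfilling_with_past_allocations_general N w a Y hw ha hY B μ hμ hlevel
end
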